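/- arXiv:2305.01593 — 10 statements merged into one kernel-verified Lean document; each statement's English description precedes it below -/
import Mathlib

section
/- Let f : {0,…,n} → ℤ be Δ_f-near concave and g : {0,…,m} → ℤ be Δ_g-near concave, where Δ_f, Δ_g ≥ 0. Then the max-plus convolution h of f and g is Δ_h-near concave for some Δ_h ≤ max{Δ_f, Δ_g}; that is, there exists a concave function h̆ : {0,…,n+m} → ℝ with h̆(k) − max{Δ_f, Δ_g} ≤ h(k) ≤ h̆(k) for all k ∈ {0,…,n+m}. -/
/-- A function `φ` on `{0,…,N}` is concave if `φ(i+1) − φ(i) ≤ φ(i) − φ(i−1)`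
for all `1 ≤ i ≤ N−1`. -/
def IsConcaveSeq (N : ℕ) (φ : ℕ → ℝ) : Prop :=
  ∀ i, 1 ≤ i → i + 1 ≤ N → φ (i + 1) - φ i ≤ φ i - φ (i - 1)

namespace MaxPlusAux

lemma slope_mono {N : ℕ} {φ : ℕ → ℝ} (hφ : IsConcaveSeq N φ) (u : ℕ) (hu : 1 ≤ u) :
    ∀ k, u + k ≤ N → φ (u + k) - φ (u + k - 1) ≤ φ u - φ (u - 1) := by
  intro k
  induction k with
  | zero => intro _; simp
  | succ t ih =>
    intro hN
    have h2 := ih (by omega)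
    have h1 := hφ (u + t) (by omega) (by omega)
    have e : u + (t + 1) = (u + t) + 1 := by omega
    have e2 : (u + t) + 1 - 1 = u + t := by omega
    rw [e, e2]
    linarith

lemma slope_mono' {N : ℕ} {φ : ℕ → ℝ} (hφ : IsConcaveSeq N φ) {u v : ℕ}
    (hu : 1 ≤ u) (huv : u ≤ v) (hv : v ≤ N) :
    φ v - φ (v - 1) ≤ φ u - φ (u - 1) := by
  obtain ⟨k, rfl⟩ : ∃ k, v = u + k := ⟨v - u, by omega⟩
  exact slope_mono hφ u hu k hv

lemma line_fwd {N : ℕ} {φ : ℕ → ℝ} {i : ℕ} {s : ℝ}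
    (hs : ∀ v, i + 1 ≤ v → v ≤ N → φ v - φ (v - 1) ≤ s) :
    ∀ k, i + k ≤ N → φ (i + k) ≤ φ i + k * s := by
  intro k
  induction k with
  | zero => intro _; simp
  | succ t ih =>
    intro hN
    have h1 := hs (i + t + 1) (by omega) (by omega)
    have h2 := ih (by omega)
    have e : i + (t + 1) = (i + t) + 1 := by omega
    have e2 : (i + t) + 1 - 1 = i + t := by omega
    rw [e]
    rw [e2] at h1
    push_cast
    have hr : ((t : ℝ) + 1) * s = t * s + s := by ring
    push_cast at h2
    linarith

lemma line_bwd {φ : ℕ → ℝ} {i : ℕ} {s : ℝ}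
    (hs : ∀ v, 1 ≤ v → v ≤ i → s ≤ φ v - φ (v - 1)) :
    ∀ k, k ≤ i → φ (i - k) + k * s ≤ φ i := by
  intro k
  induction k with
  | zero => intro _; simp
  | succ t ih =>
    intro hk
    have h1 := hs (i - t) (by omega) (by omega)
    have h2 := ih (by omega)
    have e : i - (t + 1) = (i - t) - 1 := by omega
    rw [e]
    push_cast
    have hr : ((t : ℝ) + 1) * s = t * s + s := by ring
    push_cast at h2
    linarith

lemma exists_support_line {N : ℕ} {φ : ℕ → ℝ} (hφ : IsConcaveSeq N φ) {i : ℕ} (hi : i ≤ N) :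
    ∃ c s : ℝ, (∀ t ≤ N, φ t ≤ c + s * t) ∧ c + s * i = φ i := by
  by_cases hiN : i < N
  · set s : ℝ := φ (i + 1) - φ i with hs
    refine ⟨φ i - s * i, s, ?_, by ring⟩
    intro t ht
    rcases le_or_gt t i with h | h
    · have hb : ∀ v, 1 ≤ v → v ≤ i → s ≤ φ v - φ (v - 1) := by
        intro v hv1 hv2
        have := slope_mono' hφ (u := v) (v := i + 1) hv1 (by omega) (by omega)
        have e : i + 1 - 1 = i := by omega
        rw [e] at this
        linarith
      have := line_bwd hb (i - t) (by omega)
      have e : i - (i - t) = t := by omega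
      rw [e] at this
      have ec : ((i - t : ℕ) : ℝ) = (i : ℝ) - t := by
        have : t ≤ i := h
        push_cast [this]
        ring
      rw [ec] at this
      nlinarith [this]
    · have hf : ∀ v, i + 1 ≤ v → v ≤ N → φ v - φ (v - 1) ≤ s := by
        intro v hv1 hv2
        have := slope_mono' hφ (u := i + 1) (v := v) (by omega) hv1 hv2
        have e : i + 1 - 1 = i := by omega
        rw [e] at this
        linarith
      have := line_fwd hf (t - i) (by omega)
      have e : i + (t - i) = t := by omega
      rw [e] at this
      have ec : ((t - i : ℕ) : ℝ) = (t : ℝ) - i := by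
        have hti : i ≤ t := by omega
        push_cast [hti]
        ring
      rw [ec] at this
      nlinarith [this]
  · -- i = N
    have hiN' : i = N := by omega
    subst hiN'
    by_cases hN0 : i = 0
    · subst hN0
      refine ⟨φ 0, 0, ?_, by ring⟩
      intro t ht
      have : t = 0 := by omega
      subst this
      simp
    · set s : ℝ := φ i - φ (i - 1) with hs
      refine ⟨φ i - s * i, s, ?_, by ring⟩
      intro t ht
      have hb : ∀ v, 1 ≤ v → v ≤ i → s ≤ φ v - φ (v - 1) := by
        intro v hv1 hv2
        have := slope_mono' hφ (u := v) (v := i) hv1 hv2 le_rfl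
        linarith
      have := line_bwd hb (i - t) (by omega)
      have e : i - (i - t) = t := by omega
      rw [e] at this
      have ec : ((i - t : ℕ) : ℝ) = (i : ℝ) - t := by
        have hti : t ≤ i := ht
        push_cast [hti]
        ring
      rw [ec] at this
      nlinarith [this]

/-- The set of affine majorants of `F` on `{0,…,N}`, given as pairs (intercept, slope). -/
def MajSet (N : ℕ) (F : ℕ → ℝ) : Set (ℝ × ℝ) :=
  {p | ∀ t ≤ N, F t ≤ p.1 + p.2 * t}

/-- The least concave majorant of `F` on `{0,…,N}`. -/
noncomputable def env (N : ℕ) (F : ℕ → ℝ) (i : ℕ) : ℝ :=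
  sInf ((fun p : ℝ × ℝ => p.1 + p.2 * i) '' MajSet N F)

lemma majSet_nonempty (N : ℕ) (F : ℕ → ℝ) : (MajSet N F).Nonempty := by
  refine ⟨((Finset.range (N + 1)).sup' ⟨0, by simp⟩ F, 0), ?_⟩
  intro t ht
  have : F t ≤ (Finset.range (N + 1)).sup' ⟨0, by simp⟩ F :=
    Finset.le_sup' F (by simp only [Finset.mem_range]; omega)
  simpa using this

lemma F_le_env (N : ℕ) (F : ℕ → ℝ) {i : ℕ} (hi : i ≤ N) : F i ≤ env N F i := by
  apply le_csInf ((majSet_nonempty N F).image _)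
  rintro v ⟨p, hp, rfl⟩
  exact hp i hi

lemma env_le (N : ℕ) (F : ℕ → ℝ) {i : ℕ} (hi : i ≤ N) {p : ℝ × ℝ} (hp : p ∈ MajSet N F) :
    env N F i ≤ p.1 + p.2 * i := by
  apply csInf_le
  · refine ⟨F i, ?_⟩
    rintro v ⟨q, hq, rfl⟩
    exact hq i hi
  · exact ⟨p, hp, rfl⟩

lemma env_concave (N : ℕ) (F : ℕ → ℝ) : IsConcaveSeq N (env N F) := by
  intro i hi hiN
  have key : (env N F (i + 1) + env N F (i - 1)) / 2 ≤ env N F i := by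
    apply le_csInf ((majSet_nonempty N F).image _)
    rintro v ⟨p, hp, rfl⟩
    have h1 : env N F (i + 1) ≤ p.1 + p.2 * ((i : ℝ) + 1) := by
      have := env_le N F (i := i + 1) (by omega) hp
      push_cast at this
      exact this
    have h2 : env N F (i - 1) ≤ p.1 + p.2 * ((i : ℝ) - 1) := by
      have := env_le N F (i := i - 1) (by omega) hp
      have ec : ((i - 1 : ℕ) : ℝ) = (i : ℝ) - 1 := by
        have h1i : (1 : ℕ) ≤ i := hi
        push_cast [h1i]
        ring
      rw [ec] at this
      exact this
    nlinarith [h1, h2]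
  linarith

lemma env_le_of_concave (N : ℕ) (F φ : ℕ → ℝ) (hφ : IsConcaveSeq N φ)
    (hFφ : ∀ t ≤ N, F t ≤ φ t) {i : ℕ} (hi : i ≤ N) : env N F i ≤ φ i := by
  obtain ⟨c, s, hline, heq⟩ := exists_support_line hφ hi
  have hp : (c, s) ∈ MajSet N F := fun t ht => (hFφ t ht).trans (hline t ht)
  have := env_le N F hi hp
  calc env N F i ≤ c + s * i := this
    _ = φ i := heq

lemma env_zero (N : ℕ) (F : ℕ → ℝ) : env N F 0 = F 0 := by
  classical
  refine le_antisymm ?_ (F_le_env N F (by omega))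
  set E := env N F with hE
  have hconc : IsConcaveSeq N (Function.update E 0 (F 0)) := by
    intro t ht htN
    rw [Function.update_of_ne (by omega : t + 1 ≠ 0), Function.update_of_ne (by omega : t ≠ 0)]
    rcases eq_or_ne (t - 1) 0 with hpred | hpred
    · rw [hpred, Function.update_self]
      have h0 : t = 1 := by omega
      subst h0
      have hc := env_concave N F 1 (by omega) htN
      have hF0 : F 0 ≤ E 0 := F_le_env N F (by omega)
      have e : (1 : ℕ) - 1 = 0 := rfl
      rw [e] at hc
      linarith
    · rw [Function.update_of_ne hpred]
      exact env_concave N F t ht htN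
  have hmaj : ∀ t ≤ N, F t ≤ Function.update E 0 (F 0) t := by
    intro t htN
    rcases eq_or_ne t 0 with rfl | hne
    · rw [Function.update_self]
    · rw [Function.update_of_ne hne]
      exact F_le_env N F htN
  have hfin := env_le_of_concave N F _ hconc hmaj (show 0 ≤ N by omega)
  rwa [Function.update_self] at hfin

lemma env_last (N : ℕ) (F : ℕ → ℝ) : env N F N = F N := by
  classical
  refine le_antisymm ?_ (F_le_env N F le_rfl)
  set E := env N F with hE
  have hconc : IsConcaveSeq N (Function.update E N (F N)) := by
    intro t ht htN
    rw [Function.update_of_ne (by omega : t ≠ N), Function.update_of_ne (by omega : t - 1 ≠ N)]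
    rcases eq_or_ne (t + 1) N with hsucc | hsucc
    · rw [hsucc, Function.update_self]
      have hc := env_concave N F t ht htN
      have hFN : F N ≤ E N := F_le_env N F le_rfl
      rw [hsucc] at hc
      linarith
    · rw [Function.update_of_ne hsucc]
      exact env_concave N F t ht htN
  have hmaj : ∀ t ≤ N, F t ≤ Function.update E N (F N) t := by
    intro t htN
    rcases eq_or_ne t N with rfl | hne
    · rw [Function.update_self]
    · rw [Function.update_of_ne hne]
      exact F_le_env N F htN
  have hfin := env_le_of_concave N F _ hconc hmaj le_rfl
  rwa [Function.update_self] at hfin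

lemma env_mid (N : ℕ) (F : ℕ → ℝ) {i : ℕ} (hi : 1 ≤ i) (hiN : i + 1 ≤ N) :
    env N F i ≤ max (F i) ((env N F (i - 1) + env N F (i + 1)) / 2) := by
  classical
  set E := env N F with hE
  set M := max (F i) ((E (i - 1) + E (i + 1)) / 2) with hM
  have hME : M ≤ E i := by
    apply max_le
    · exact F_le_env N F (by omega)
    · have := env_concave N F i hi hiN
      linarith
  have hconc : IsConcaveSeq N (Function.update E i M) := by
    intro t ht htN
    rcases eq_or_ne t i with rfl | hti
    · rw [Function.update_self, Function.update_of_ne (by omega : t + 1 ≠ t),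
        Function.update_of_ne (by omega : t - 1 ≠ t)]
      have : (E (t - 1) + E (t + 1)) / 2 ≤ M := le_max_right _ _
      linarith
    · rcases eq_or_ne (t + 1) i with hsucc | hsucc
      · rw [hsucc, Function.update_self, Function.update_of_ne hti,
          Function.update_of_ne (by omega : t - 1 ≠ i)]
        have hc := env_concave N F t ht (by omega)
        rw [hsucc] at hc
        linarith
      · rcases eq_or_ne (t - 1) i with hpred | hpred
        · rw [Function.update_of_ne hsucc, Function.update_of_ne hti,
            hpred, Function.update_self]
          have hc := env_concave N F t ht htN
          rw [hpred] at hc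
          linarith
        · rw [Function.update_of_ne hsucc, Function.update_of_ne hti,
            Function.update_of_ne hpred]
          exact env_concave N F t ht htN
  have hmaj : ∀ t ≤ N, F t ≤ Function.update E i M t := by
    intro t htN
    rcases eq_or_ne t i with rfl | hne
    · rw [Function.update_self]
      exact le_max_left _ _
    · rw [Function.update_of_ne hne]
      exact F_le_env N F htN
  have hfin := env_le_of_concave N F _ hconc hmaj (show i ≤ N by omega)
  rwa [Function.update_self] at hfin

lemma env_touch (N : ℕ) (F : ℕ → ℝ) {i : ℕ} (hi : i ≤ N) (hne : env N F i ≠ F i) :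
    1 ≤ i ∧ i + 1 ≤ N ∧
      env N F (i + 1) - env N F i = env N F i - env N F (i - 1) := by
  have h0 : i ≠ 0 := by rintro rfl; exact hne (env_zero N F)
  have hN : i ≠ N := by rintro rfl; exact hne (env_last _ F)
  have h1 : 1 ≤ i := by omega
  have h2 : i + 1 ≤ N := by omega
  refine ⟨h1, h2, ?_⟩
  have hmid := env_mid N F h1 h2
  have hc := env_concave N F i h1 h2
  have hge := F_le_env N F hi
  rcases le_max_iff.mp hmid with hle | hle
  · exact absurd (le_antisymm hle hge) hne
  · linarith

/-- The real-valued core of the theorem. -/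
lemma main_real (n m : ℕ) (F G H : ℕ → ℝ) (Δf Δg : ℝ)
    (fhat ghat : ℕ → ℝ) (hfconc : IsConcaveSeq n fhat) (hgconc : IsConcaveSeq m ghat)
    (hfu : ∀ i ≤ n, F i ≤ fhat i) (hfl : ∀ i ≤ n, fhat i - Δf ≤ F i)
    (hgu : ∀ j ≤ m, G j ≤ ghat j) (hgl : ∀ j ≤ m, ghat j - Δg ≤ G j)
    (hub' : ∀ k ≤ n + m, ∀ i ≤ n, ∀ j ≤ m, i + j = k → F i + G j ≤ H k)
    (hex : ∀ k ≤ n + m, ∃ i, i ≤ n ∧ ∃ j, j ≤ m ∧ i + j = k ∧ H k = F i + G j) :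
    ∃ hhat : ℕ → ℝ, IsConcaveSeq (n + m) hhat ∧
      ∀ k ≤ n + m, hhat k - max Δf Δg ≤ H k ∧ H k ≤ hhat k := by
  classical
  set fe := env n F with hfe
  set ge := env m G with hge
  have hFfe : ∀ i ≤ n, F i ≤ fe i := fun i hi => F_le_env n F hi
  have hGge : ∀ j ≤ m, G j ≤ ge j := fun j hj => F_le_env m G hj
  have hfeD : ∀ i ≤ n, fe i ≤ F i + Δf := by
    intro i hi
    have h1 := env_le_of_concave n F fhat hfconc hfu hi
    have h2 := hfl i hi
    linarith
  have hgeD : ∀ j ≤ m, ge j ≤ G j + Δg := by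
    intro j hj
    have h1 := env_le_of_concave m G ghat hgconc hgu hj
    have h2 := hgl j hj
    linarith
  have hfec : IsConcaveSeq n fe := env_concave n F
  have hgec : IsConcaveSeq m ge := env_concave m G
  -- index set of valid splits (with a harmless inserted default element)
  set J : ℕ → Finset ℕ := fun k => insert (min k n)
      ((Finset.range (n + 1)).filter (fun i => i ≤ k ∧ k ≤ i + m)) with hJ
  have hJne : ∀ k, (J k).Nonempty := fun k => Finset.insert_nonempty _ _
  have hJmem : ∀ k, k ≤ n + m → ∀ i ∈ J k, i ≤ n ∧ i ≤ k ∧ k ≤ i + m := by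
    intro k hk i hi
    rw [hJ] at hi
    simp only [Finset.mem_insert, Finset.mem_filter, Finset.mem_range] at hi
    rcases hi with rfl | ⟨h1, h2, h3⟩ <;> omega
  have hJof : ∀ k i, i ≤ n → i ≤ k → k ≤ i + m → i ∈ J k := by
    intro k i h1 h2 h3
    rw [hJ]
    simp only [Finset.mem_insert, Finset.mem_filter, Finset.mem_range]
    right
    exact ⟨by omega, h2, h3⟩
  set hhat : ℕ → ℝ := fun k => (J k).sup' (hJne k) (fun i => fe i + ge (k - i)) with hhh
  have attain : ∀ k, ∃ i ∈ J k, hhat k = fe i + ge (k - i) := by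
    intro k
    exact Finset.exists_mem_eq_sup' (hJne k) _
  have le_hhat : ∀ k, ∀ i ∈ J k, fe i + ge (k - i) ≤ hhat k := by
    intro k i hi
    exact Finset.le_sup' (fun i => fe i + ge (k - i)) hi
  -- upper bound : H ≤ hhat
  have hub : ∀ k ≤ n + m, H k ≤ hhat k := by
    intro k hk
    obtain ⟨i, hi, j, hj, hij, hval⟩ := hex k hk
    have hiJ : i ∈ J k := hJof k i hi (by omega) (by omega)
    have hji : k - i = j := by omega
    have h1 : F i + G j ≤ fe i + ge (k - i) := by
      rw [hji]
      have := hFfe i hi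
      have := hGge j hj
      linarith
    have := le_hhat k i hiJ
    rw [hval]
    linarith
  -- lower bound : hhat ≤ H + max Δf Δg
  have hlb : ∀ k ≤ n + m, hhat k ≤ H k + max Δf Δg := by
    intro k hk
    set O := (J k).filter (fun i => fe i + ge (k - i) = hhat k) with hO
    have hOne : O.Nonempty := by
      obtain ⟨i, hi, hval⟩ := attain k
      exact ⟨i, Finset.mem_filter.mpr ⟨hi, hval.symm⟩⟩
    set i₀ := O.min' hOne with hi₀
    have hi₀O : i₀ ∈ O := Finset.min'_mem _ _
    obtain ⟨hi₀J, hval⟩ := Finset.mem_filter.mp hi₀O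
    obtain ⟨hi₀n, hi₀k, hkim⟩ := hJmem k hk i₀ hi₀J
    have hj₀m : k - i₀ ≤ m := by omega
    have hij : i₀ + (k - i₀) = k := by omega
    by_cases hfi : fe i₀ = F i₀
    · have h1 : ge (k - i₀) ≤ G (k - i₀) + Δg := hgeD _ hj₀m
      have h2 : F i₀ + G (k - i₀) ≤ H k := hub' k hk i₀ hi₀n _ hj₀m hij
      have h3 : Δg ≤ max Δf Δg := le_max_right _ _
      rw [← hval, hfi]
      linarith
    · by_cases hgj : ge (k - i₀) = G (k - i₀)
      · have h1 : fe i₀ ≤ F i₀ + Δf := hfeD _ hi₀n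
        have h2 : F i₀ + G (k - i₀) ≤ H k := hub' k hk i₀ hi₀n _ hj₀m hij
        have h3 : Δf ≤ max Δf Δg := le_max_left _ _
        rw [← hval, hgj]
        linarith
      · exfalso
        obtain ⟨hi₁, hi₂, hsf⟩ := env_touch n F hi₀n hfi
        obtain ⟨hj₁, hj₂, hsg⟩ := env_touch m G hj₀m hgj
        have hmem1 : (i₀ + 1) ∈ J k := hJof k _ (by omega) (by omega) (by omega)
        have hle1 := le_hhat k _ hmem1
        have e1 : k - (i₀ + 1) = (k - i₀) - 1 := by omega
        rw [e1] at hle1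
        have hmem2 : (i₀ - 1) ∈ J k := hJof k _ (by omega) (by omega) (by omega)
        have hle2 := le_hhat k _ hmem2
        have e2 : k - (i₀ - 1) = (k - i₀) + 1 := by omega
        rw [e2] at hle2
        have heq : fe (i₀ - 1) + ge ((k - i₀) + 1) = hhat k := by
          rw [← hval] at hle1 hle2 ⊢
          linarith
        have hO2 : (i₀ - 1) ∈ O := Finset.mem_filter.mpr ⟨hmem2, by rw [e2]; exact heq⟩
        have := Finset.min'_le O _ hO2
        omega
  -- concavity of hhat
  have hconc : IsConcaveSeq (n + m) hhat := by
    intro k hk hkN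
    obtain ⟨i₁, hi₁J, hv₁⟩ := attain (k + 1)
    obtain ⟨i₂, hi₂J, hv₂⟩ := attain (k - 1)
    obtain ⟨hi₁n, hi₁k, h₁m⟩ := hJmem (k + 1) (by omega) i₁ hi₁J
    obtain ⟨hi₂n, hi₂k, h₂m⟩ := hJmem (k - 1) (by omega) i₂ hi₂J
    rcases le_or_gt i₁ i₂ with hcase | hcase
    · -- exchange in g
      have hm1 : i₁ ∈ J k := hJof k i₁ hi₁n (by omega) (by omega)
      have hm2 : i₂ ∈ J k := hJof k i₂ hi₂n (by omega) (by omega)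
      have hle1 := le_hhat k i₁ hm1
      have hle2 := le_hhat k i₂ hm2
      have hs := slope_mono' hgec (u := k - i₂) (v := k + 1 - i₁) (by omega) (by omega) (by omega)
      have e1 : (k + 1 - i₁) - 1 = k - i₁ := by omega
      have e2 : (k - i₂) - 1 = k - 1 - i₂ := by omega
      rw [e1, e2] at hs
      rw [hv₁, hv₂]
      linarith
    · -- exchange in f
      have hm1 : (i₁ - 1) ∈ J k := hJof k _ (by omega) (by omega) (by omega)
      have hm2 : (i₂ + 1) ∈ J k := hJof k _ (by omega) (by omega) (by omega)
      have hle1 := le_hhat k _ hm1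
      have hle2 := le_hhat k _ hm2
      have e1 : k - (i₁ - 1) = k + 1 - i₁ := by omega
      have e2 : k - (i₂ + 1) = k - 1 - i₂ := by omega
      rw [e1] at hle1
      rw [e2] at hle2
      have hs := slope_mono' hfec (u := i₂ + 1) (v := i₁) (by omega) (by omega) hi₁n
      have e3 : i₂ + 1 - 1 = i₂ := by omega
      rw [e3] at hs
      rw [hv₁, hv₂]
      linarith
  refine ⟨hhat, hconc, ?_⟩
  intro k hk
  constructor
  · have := hlb k hk
    linarith
  · exact hub k hk

end MaxPlusAux

/-- The max-plus convolution of a `Δf`-near concave and a `Δg`-near concave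
function is `max Δf Δg`-near concave. -/
theorem maxPlusConv_near_concave (n m : ℕ) (f g h : ℕ → ℤ) (Δf Δg : ℝ)
    (hΔf : 0 ≤ Δf) (hΔg : 0 ≤ Δg) (fhat ghat : ℕ → ℝ)
    (hfconc : IsConcaveSeq n fhat) (hgconc : IsConcaveSeq m ghat)
    (hf : ∀ i ≤ n, fhat i - Δf ≤ (f i : ℝ) ∧ (f i : ℝ) ≤ fhat i)
    (hg : ∀ j ≤ m, ghat j - Δg ≤ (g j : ℝ) ∧ (g j : ℝ) ≤ ghat j)
    (hh : ∀ k ≤ n + m,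
      IsGreatest {v : ℤ | ∃ i ≤ n, ∃ j ≤ m, i + j = k ∧ v = f i + g j} (h k)) :
    ∃ hhat : ℕ → ℝ, IsConcaveSeq (n + m) hhat ∧
      ∀ k ≤ n + m, hhat k - max Δf Δg ≤ (h k : ℝ) ∧ (h k : ℝ) ≤ hhat k := by
  apply MaxPlusAux.main_real n m (fun i => (f i : ℝ)) (fun j => (g j : ℝ)) (fun k => (h k : ℝ))
    Δf Δg fhat ghat hfconc hgconc
    (fun i hi => (hf i hi).2) (fun i hi => (hf i hi).1)
    (fun j hj => (hg j hj).2) (fun j hj => (hg j hj).1)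
  · intro k hk i hi j hj hij
    have hmem : f i + g j ∈ {v : ℤ | ∃ i ≤ n, ∃ j ≤ m, i + j = k ∧ v = f i + g j} :=
      ⟨i, hi, j, hj, hij, rfl⟩
    have := (hh k hk).2 hmem
    exact_mod_cast this
  · intro k hk
    obtain ⟨i, hi, j, hj, hij, hval⟩ := (hh k hk).1
    exact ⟨i, hi, j, hj, hij, by rw [hval]; push_cast; ring⟩
end

section
/- Let n ≥ 2 be an integer and let w_max > 0 and W > 0 be reals. Let w_1, …, w_n be reals with 0 ≤ w_i ≤ w_max for each i and Σ_{i=1}^n w_i ≤ W. Let p be a real with w_max/W ≤ p ≤ 1, and let X_1, …, X_n be independent Bernoulli random variables, each equal to 1 with probability p and 0 with probability 1 − p. Set Z = Σ_{i=1}^n w_i X_i. Then Pr( |Z − p·Σ_{i=1}^n w_i| ≥ √(p · w_max · W) · 10 · log n ) ≤ 1/n⁴, where log denotes the natural logarithm. -/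
open MeasureTheory ProbabilityTheory

open Real in

lemma exp_le_quadratic {x : ℝ} (hx : |x| ≤ 1) : Real.exp x ≤ 1 + x + x ^ 2 := by
  have h := Real.exp_bound hx (by norm_num : 0 < 2)
  have h2 : ∑ m ∈ Finset.range 2, x ^ m / m.factorial = 1 + x := by
    simp [Finset.sum_range_succ]
  rw [h2] at h
  have h3 := le_of_abs_le h
  have h4 : |x| ^ 2 = x ^ 2 := sq_abs x
  rw [h4] at h3
  norm_num [Nat.factorial] at h3
  nlinarith [sq_nonneg x]

lemma bernoulli_mgf_le {p a : ℝ} (hp0 : 0 ≤ p) (hp1 : p ≤ 1) (ha : |a| ≤ 1) :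
    Real.exp (-(a * p)) * (1 + p * (Real.exp a - 1)) ≤ Real.exp (p * a ^ 2) := by
  have h1 : 1 + p * (Real.exp a - 1) ≤ Real.exp (p * (Real.exp a - 1)) := by
    have := Real.add_one_le_exp (p * (Real.exp a - 1))
    linarith
  calc Real.exp (-(a * p)) * (1 + p * (Real.exp a - 1))
      ≤ Real.exp (-(a * p)) * Real.exp (p * (Real.exp a - 1)) := by
        exact mul_le_mul_of_nonneg_left h1 (Real.exp_pos _).le
    _ = Real.exp (p * (Real.exp a - 1 - a)) := by rw [← Real.exp_add]; ring_nf
    _ ≤ Real.exp (p * a ^ 2) := by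
        apply Real.exp_le_exp.mpr
        have := exp_le_quadratic ha
        nlinarith


lemma integral_bernoulli {Ω : Type*} [MeasurableSpace Ω] (μ : Measure Ω) [IsProbabilityMeasure μ]
    (X : Ω → ℝ) (hXm : Measurable X) (h01 : ∀ ω, X ω = 0 ∨ X ω = 1)
    (p : ℝ) (hp0 : 0 ≤ p) (hB : μ {ω | X ω = 1} = ENNReal.ofReal p) :
    ∫ ω, X ω ∂μ = p ∧ Integrable X μ := by
  have hS : MeasurableSet {ω | X ω = 1} := hXm (measurableSet_singleton 1)
  have hX : X = Set.indicator {ω | X ω = 1} (fun _ => (1:ℝ)) := by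
    funext ω
    rcases h01 ω with h | h <;> simp [Set.indicator, h]
  constructor
  · rw [hX, integral_indicator_const (1:ℝ) hS, measureReal_def, hB, ENNReal.toReal_ofReal hp0, smul_eq_mul,
      mul_one]
  · rw [hX]
    exact (integrable_const (1:ℝ)).indicator hS

lemma mgf_bernoulli_affine {Ω : Type*} [MeasurableSpace Ω] (μ : Measure Ω) [IsProbabilityMeasure μ]
    (X : Ω → ℝ) (hXm : Measurable X) (h01 : ∀ ω, X ω = 0 ∨ X ω = 1)
    (p : ℝ) (hp0 : 0 ≤ p) (hB : μ {ω | X ω = 1} = ENNReal.ofReal p)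
    (c d l : ℝ) :
    mgf (fun ω => c * X ω + d) μ l = Real.exp (l * d) * (1 + p * (Real.exp (l * c) - 1)) := by
  obtain ⟨hint, hI⟩ := integral_bernoulli μ X hXm h01 p hp0 hB
  have hpt : ∀ ω, Real.exp (l * (c * X ω + d)) =
      Real.exp (l * d) * (1 + (Real.exp (l * c) - 1) * X ω) := by
    intro ω
    rcases h01 ω with h | h
    · simp [h]
    · rw [h]
      rw [mul_one, mul_one, mul_add, Real.exp_add]
      ring
  rw [mgf]
  calc ∫ ω, Real.exp (l * (c * X ω + d)) ∂μ
      = ∫ ω, Real.exp (l * d) * (1 + (Real.exp (l * c) - 1) * X ω) ∂μ := by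
        exact integral_congr_ae (Filter.Eventually.of_forall hpt)
    _ = Real.exp (l * d) * ∫ ω, (1 + (Real.exp (l * c) - 1) * X ω) ∂μ := by
        rw [integral_const_mul]
    _ = Real.exp (l * d) * (1 + (Real.exp (l * c) - 1) * p) := by
        rw [integral_add (integrable_const 1) (hI.const_mul _), integral_const,
          integral_const_mul, hint]
        simp
    _ = Real.exp (l * d) * (1 + p * (Real.exp (l * c) - 1)) := by ring

lemma knap_onesided {Ω : Type*} [MeasurableSpace Ω]
    (μ : Measure Ω) [IsProbabilityMeasure μ]
    (n : ℕ) (wmax W : ℝ) (hwmax : 0 < wmax) (hW : 0 ≤ W)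
    (w : Fin n → ℝ) (hw : ∀ i, 0 ≤ w i ∧ w i ≤ wmax) (hsum : ∑ i, w i ≤ W)
    (p : ℝ) (hp0 : 0 ≤ p) (hp₂ : p ≤ 1)
    (X : Fin n → Ω → ℝ) (hmeas : ∀ i, Measurable (X i))
    (hind : iIndepFun X μ)
    (h01 : ∀ i, ∀ ω, X i ω = 0 ∨ X i ω = 1)
    (hBer : ∀ i, μ {ω | X i ω = 1} = ENNReal.ofReal p)
    (s : ℝ) (hs : s = 1 ∨ s = -1)
    (l t : ℝ) (hl : 0 ≤ l) (hlw : l * wmax ≤ 1) :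
    μ {ω | t ≤ s * ((∑ i, w i * X i ω) - p * ∑ i, w i)} ≤
      ENNReal.ofReal (Real.exp (l ^ 2 * (p * wmax * W) - l * t)) := by
  have hs2 : s * s = 1 := by rcases hs with h | h <;> simp [h]
  have hsabs : |s| = 1 := by rcases hs with h | h <;> simp [h]
  set g : Fin n → ℝ → ℝ := fun i x => s * w i * x + (-(s * p * w i)) with hg
  set Y : Fin n → Ω → ℝ := fun i => g i ∘ X i with hY
  have hYmeas : ∀ i, Measurable (Y i) := fun i =>
    ((measurable_id.const_mul _).add_const _).comp (hmeas i)
  have hindY : iIndepFun Y μ :=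
    hind.comp g (fun i => (measurable_id.const_mul _).add_const _)
  -- rewrite the target function as a sum of the Y i
  have hZ : (fun ω => s * ((∑ i, w i * X i ω) - p * ∑ i, w i)) = ∑ i, Y i := by
    funext ω
    rw [Finset.sum_apply]
    have : ∀ i ∈ Finset.univ, Y i ω = s * (w i * X i ω) - s * (p * w i) := by
      intro i _; simp only [hY, hg, Function.comp_apply]; ring
    rw [Finset.sum_congr rfl this, Finset.sum_sub_distrib, ← Finset.mul_sum, ← Finset.mul_sum,
      ← Finset.mul_sum]
    ring
  -- bound each Y i pointwise
  have hYb : ∀ i ω, |Y i ω| ≤ w i := by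
    intro i ω
    have hwi := hw i
    simp only [hY, hg, Function.comp_apply]
    have : s * w i * X i ω + -(s * p * w i) = s * (w i * X i ω - p * w i) := by ring
    rw [this, abs_mul, hsabs, one_mul]
    rcases h01 i ω with h | h <;> rw [h] <;> rw [abs_le] <;> constructor <;> nlinarith
  -- mgf bound for each Y i
  have hYmgf : ∀ i, mgf (Y i) μ l ≤ Real.exp (l ^ 2 * (p * wmax) * w i) := by
    intro i
    have hwi := hw i
    have heq : mgf (Y i) μ l =
        Real.exp (l * (-(s * p * w i))) * (1 + p * (Real.exp (l * (s * w i)) - 1)) := by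
      have : Y i = fun ω => (s * w i) * X i ω + (-(s * p * w i)) := rfl
      rw [this, mgf_bernoulli_affine μ (X i) (hmeas i) (h01 i) p hp0 (hBer i)]
    rw [heq]
    set a : ℝ := l * (s * w i) with ha
    have ha1 : |a| ≤ 1 := by
      rw [ha, abs_mul, abs_mul, hsabs, abs_of_nonneg hl, abs_of_nonneg hwi.1, one_mul]
      calc l * w i ≤ l * wmax := mul_le_mul_of_nonneg_left hwi.2 hl
        _ ≤ 1 := hlw
    have h1 : l * (-(s * p * w i)) = -(a * p) := by rw [ha]; ring
    rw [h1]
    calc Real.exp (-(a * p)) * (1 + p * (Real.exp a - 1))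
        ≤ Real.exp (p * a ^ 2) := bernoulli_mgf_le hp0 hp₂ ha1
      _ ≤ Real.exp (l ^ 2 * (p * wmax) * w i) := by
          apply Real.exp_le_exp.mpr
          have : p * a ^ 2 = p * l ^ 2 * (w i * w i) * (s * s) := by rw [ha]; ring
          rw [this, hs2, mul_one]
          have h1 : w i * w i ≤ wmax * w i := mul_le_mul_of_nonneg_right hwi.2 hwi.1
          have h2 : (0:ℝ) ≤ p * l ^ 2 := by positivity
          calc p * l ^ 2 * (w i * w i) ≤ p * l ^ 2 * (wmax * w i) :=
                mul_le_mul_of_nonneg_left h1 h2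
            _ = l ^ 2 * (p * wmax) * w i := by ring
  -- mgf of the sum
  have hmgfsum : mgf (∑ i, Y i) μ l ≤ Real.exp (l ^ 2 * (p * wmax * W)) := by
    rw [hindY.mgf_sum hYmeas]
    calc ∏ i, mgf (Y i) μ l ≤ ∏ i, Real.exp (l ^ 2 * (p * wmax) * w i) :=
          Finset.prod_le_prod (fun i _ => mgf_nonneg) (fun i _ => hYmgf i)
      _ = Real.exp (∑ i, l ^ 2 * (p * wmax) * w i) := by rw [Real.exp_sum]
      _ ≤ Real.exp (l ^ 2 * (p * wmax * W)) := by
          apply Real.exp_le_exp.mpr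
          rw [← Finset.mul_sum]
          have h0 : (0:ℝ) ≤ l ^ 2 * (p * wmax) := by positivity
          calc l ^ 2 * (p * wmax) * ∑ i, w i ≤ l ^ 2 * (p * wmax) * W :=
                mul_le_mul_of_nonneg_left hsum h0
            _ = l ^ 2 * (p * wmax * W) := by ring
  -- integrability of exp (l * sum)
  have hZmeas : Measurable (∑ i, Y i) := by
    rw [← hZ]
    exact ((Finset.measurable_sum Finset.univ fun i _ =>
      ((hmeas i).const_mul (w i))).sub measurable_const).const_mul s
  have hint : Integrable (fun ω => Real.exp (l * (∑ i, Y i) ω)) μ := by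
    apply Integrable.mono' (integrable_const (Real.exp (l * W)))
      ((hZmeas.const_mul l).exp.aestronglyMeasurable)
    apply Filter.Eventually.of_forall
    intro ω
    rw [Real.norm_eq_abs, abs_of_pos (Real.exp_pos _), Real.exp_le_exp]
    have hb : (∑ i, Y i) ω ≤ W := by
      rw [Finset.sum_apply]
      calc ∑ i, Y i ω ≤ ∑ i, w i := Finset.sum_le_sum (fun i _ => (abs_le.mp (hYb i _)).2)
        _ ≤ W := hsum
    exact mul_le_mul_of_nonneg_left hb hl
  -- Chernoff
  have hch : (μ {ω | t ≤ (∑ i, Y i) ω}).toReal ≤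
      Real.exp (-l * t) * mgf (∑ i, Y i) μ l := measure_ge_le_exp_mul_mgf t hl hint
  have hfin : μ {ω | t ≤ (∑ i, Y i) ω} ≠ ⊤ := measure_ne_top _ _
  have hset : {ω | t ≤ s * ((∑ i, w i * X i ω) - p * ∑ i, w i)} = {ω | t ≤ (∑ i, Y i) ω} := by
    ext ω
    simp only [Set.mem_setOf_eq, ← hZ]
  rw [hset, ← ENNReal.ofReal_toReal hfin]
  apply ENNReal.ofReal_le_ofReal
  calc (μ {ω | t ≤ (∑ i, Y i) ω}).toReal ≤ Real.exp (-l * t) * mgf (∑ i, Y i) μ l := hch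
    _ ≤ Real.exp (-l * t) * Real.exp (l ^ 2 * (p * wmax * W)) :=
        mul_le_mul_of_nonneg_left hmgfsum (Real.exp_pos _).le
    _ = Real.exp (l ^ 2 * (p * wmax * W) - l * t) := by rw [← Real.exp_add]; ring_nf

/-- Bernstein-type concentration for a weighted sum of i.i.d.-type
Bernoulli random variables, as used in the Knapsack algorithm. -/
theorem knapsack_concentration {Ω : Type*} [MeasurableSpace Ω]
    (μ : Measure Ω) [IsProbabilityMeasure μ]
    (n : ℕ) (hn : 2 ≤ n) (wmax W : ℝ) (hwmax : 0 < wmax) (hW : 0 < W)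
    (w : Fin n → ℝ) (hw : ∀ i, 0 ≤ w i ∧ w i ≤ wmax) (hsum : ∑ i, w i ≤ W)
    (p : ℝ) (hp₁ : wmax / W ≤ p) (hp₂ : p ≤ 1)
    (X : Fin n → Ω → ℝ) (hmeas : ∀ i, Measurable (X i))
    (hind : iIndepFun X μ)
    (h01 : ∀ i, ∀ ω, X i ω = 0 ∨ X i ω = 1)
    (hBer : ∀ i, μ {ω | X i ω = 1} = ENNReal.ofReal p) :
    μ {ω | Real.sqrt (p * wmax * W) * 10 * Real.log n ≤
        |(∑ i, w i * X i ω) - p * ∑ i, w i|} ≤ ENNReal.ofReal (1 / (n : ℝ) ^ 4) := by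
  have hp0 : 0 < p := lt_of_lt_of_le (div_pos hwmax hW) hp₁
  have hv : 0 < p * wmax * W := by positivity
  set σ : ℝ := Real.sqrt (p * wmax * W) with hσ
  have hσpos : 0 < σ := Real.sqrt_pos.mpr hv
  have hσsq : σ ^ 2 = p * wmax * W := Real.sq_sqrt hv.le
  have hwσ : wmax ≤ σ := by
    have h1 : wmax ≤ p * W := (div_le_iff₀ hW).mp hp₁
    have h2 : wmax ^ 2 ≤ p * wmax * W := by nlinarith
    nlinarith [Real.sq_sqrt hv.le, Real.sqrt_nonneg (p * wmax * W)]
  set L : ℝ := Real.log n with hLdef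
  have hn1 : (1:ℝ) < (n:ℝ) := by exact_mod_cast Nat.lt_of_lt_of_le one_lt_two hn
  have hLpos : 0 < L := Real.log_pos hn1
  have hL2 : Real.log 2 ≤ L := Real.log_le_log (by norm_num) (by exact_mod_cast hn)
  have hlog2 : (0.6931471803 : ℝ) < Real.log 2 := Real.log_two_gt_d9
  set l : ℝ := min (5 * L / σ) (1 / wmax) with hl
  have hl0 : 0 ≤ l := le_min (by positivity) (by positivity)
  have hlw : l * wmax ≤ 1 := by
    have : l ≤ 1 / wmax := min_le_right _ _
    calc l * wmax ≤ (1 / wmax) * wmax := mul_le_mul_of_nonneg_right this hwmax.le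
      _ = 1 := by field_simp
  have hlσ1 : l * σ ≤ 5 * L := by
    have : l ≤ 5 * L / σ := min_le_left _ _
    calc l * σ ≤ (5 * L / σ) * σ := mul_le_mul_of_nonneg_right this hσpos.le
      _ = 5 * L := by field_simp
  have hlσ2 : 1 ≤ l * σ := by
    rcases min_cases (5 * L / σ) (1 / wmax) with ⟨h, _⟩ | ⟨h, _⟩
    · rw [hl, h, div_mul_cancel₀ _ hσpos.ne']
      nlinarith
    · rw [hl, h]
      rw [div_mul_eq_mul_div, one_mul, le_div_iff₀ hwmax, one_mul]
      exact hwσ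
  -- exponent bound
  set t : ℝ := σ * 10 * L with ht
  have hexp : l ^ 2 * (p * wmax * W) - l * t ≤ -5 * L := by
    rw [← hσsq, ht]
    have k1 : (l * σ) * (l * σ) ≤ (5 * L) * (l * σ) :=
      mul_le_mul_of_nonneg_right hlσ1 (le_trans zero_le_one hlσ2)
    have k2 : 5 * L * 1 ≤ (5 * L) * (l * σ) :=
      mul_le_mul_of_nonneg_left hlσ2 (by positivity)
    nlinarith
  -- two one-sided bounds
  have hplus := knap_onesided μ n wmax W hwmax hW.le w hw hsum p hp0.le hp₂ X hmeas hind h01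
    hBer 1 (Or.inl rfl) l t hl0 hlw
  have hminus := knap_onesided μ n wmax W hwmax hW.le w hw hsum p hp0.le hp₂ X hmeas hind h01
    hBer (-1) (Or.inr rfl) l t hl0 hlw
  -- union bound
  have hsub : {ω | σ * 10 * L ≤ |(∑ i, w i * X i ω) - p * ∑ i, w i|} ⊆
      {ω | t ≤ 1 * ((∑ i, w i * X i ω) - p * ∑ i, w i)} ∪
      {ω | t ≤ (-1) * ((∑ i, w i * X i ω) - p * ∑ i, w i)} := by
    intro ω hω
    simp only [Set.mem_setOf_eq] at hω
    rcases le_abs.mp hω with h | h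
    · left; simpa [ht] using h
    · right; simp only [Set.mem_setOf_eq, neg_one_mul]; rw [ht]; linarith
  have hstep : μ {ω | σ * 10 * L ≤ |(∑ i, w i * X i ω) - p * ∑ i, w i|} ≤
      ENNReal.ofReal (2 * Real.exp (l ^ 2 * (p * wmax * W) - l * t)) := by
    calc μ {ω | σ * 10 * L ≤ |(∑ i, w i * X i ω) - p * ∑ i, w i|}
        ≤ μ ({ω | t ≤ 1 * ((∑ i, w i * X i ω) - p * ∑ i, w i)} ∪
          {ω | t ≤ (-1) * ((∑ i, w i * X i ω) - p * ∑ i, w i)}) := measure_mono hsub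
      _ ≤ μ {ω | t ≤ 1 * ((∑ i, w i * X i ω) - p * ∑ i, w i)} +
          μ {ω | t ≤ (-1) * ((∑ i, w i * X i ω) - p * ∑ i, w i)} := measure_union_le _ _
      _ ≤ ENNReal.ofReal (Real.exp (l ^ 2 * (p * wmax * W) - l * t)) +
          ENNReal.ofReal (Real.exp (l ^ 2 * (p * wmax * W) - l * t)) := add_le_add hplus hminus
      _ = ENNReal.ofReal (2 * Real.exp (l ^ 2 * (p * wmax * W) - l * t)) := by
          rw [← ENNReal.ofReal_add (Real.exp_pos _).le (Real.exp_pos _).le]; ring_nf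
  refine le_trans hstep (ENNReal.ofReal_le_ofReal ?_)
  -- final numeric bound : 2 * exp(E) ≤ 1 / n ^ 4
  have hE : Real.exp (l ^ 2 * (p * wmax * W) - l * t) ≤ Real.exp (-5 * L) :=
    Real.exp_le_exp.mpr hexp
  have hnpos : (0:ℝ) < (n:ℝ) := by positivity
  have hexp5 : Real.exp (5 * L) = (n:ℝ) ^ 5 := by
    have h : (5 : ℝ) * L = Real.log ((n:ℝ) ^ 5) := by
      rw [hLdef, Real.log_pow]; push_cast; ring
    rw [h, Real.exp_log (by positivity)]
  have h5 : Real.exp (-5 * L) = 1 / (n:ℝ) ^ 5 := by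
    rw [show (-5 : ℝ) * L = -(5 * L) by ring, Real.exp_neg, hexp5, one_div]
  have hfin : 2 * (1 / (n:ℝ) ^ 5) ≤ 1 / (n:ℝ) ^ 4 := by
    rw [mul_one_div, div_le_div_iff₀ (by positivity) (by positivity)]
    have hn2 : (2:ℝ) ≤ (n:ℝ) := by exact_mod_cast hn
    have : (n:ℝ) ^ 5 = (n:ℝ) * (n:ℝ) ^ 4 := by ring
    nlinarith [pow_pos hnpos 4]
  calc 2 * Real.exp (l ^ 2 * (p * wmax * W) - l * t) ≤ 2 * Real.exp (-5 * L) := by linarith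
    _ = 2 * (1 / (n:ℝ) ^ 5) := by rw [h5]
    _ ≤ 1 / (n:ℝ) ^ 4 := hfin
end

section
/- Let items 1,…,n have natural-number weights w_i and profits p_i, and for a subset J ⊆ {1,…,n} define the profit sequence P_J(j) = max{ Σ_{i∈S} p_i : S ⊆ J, Σ_{i∈S} w_i ≤ j } for j ∈ ℕ. If {1,…,n} is partitioned into disjoint sets A and B, then for every k ∈ ℕ: P_{A∪B}(k) = max{ P_A(i) + P_B(k−i) : 0 ≤ i ≤ k }; that is, the profit sequence of the union of two disjoint item sets is the max-plus convolution of their profit sequences. -/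
/-- The profit sequence of the disjoint union of two item sets is the
max-plus convolution of their profit sequences. -/
theorem profitSeq_union_eq_maxPlusConv (n : ℕ) (w p : Fin n → ℕ)
    (A B : Finset (Fin n)) (hdisj : Disjoint A B) (hunion : A ∪ B = Finset.univ)
    (PA PB PAB : ℕ → ℕ)
    (hPA : ∀ j, IsGreatest
      {v : ℕ | ∃ S ⊆ A, ∑ i ∈ S, w i ≤ j ∧ v = ∑ i ∈ S, p i} (PA j))
    (hPB : ∀ j, IsGreatest
      {v : ℕ | ∃ S ⊆ B, ∑ i ∈ S, w i ≤ j ∧ v = ∑ i ∈ S, p i} (PB j))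
    (hPAB : ∀ j, IsGreatest
      {v : ℕ | ∃ S : Finset (Fin n), ∑ i ∈ S, w i ≤ j ∧ v = ∑ i ∈ S, p i} (PAB j)) :
    ∀ k, IsGreatest {v : ℕ | ∃ i ≤ k, v = PA i + PB (k - i)} (PAB k) := by
  intro k
  -- upper bound part first
  have hub : ∀ v ∈ {v : ℕ | ∃ i ≤ k, v = PA i + PB (k - i)}, v ≤ PAB k := by
    rintro v ⟨i, hik, rfl⟩
    obtain ⟨SA, hSA, hwA, hpA⟩ := (hPA i).1
    obtain ⟨SB, hSB, hwB, hpB⟩ := (hPB (k - i)).1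
    have hdisjS : Disjoint SA SB := hdisj.mono hSA hSB
    apply (hPAB k).2
    refine ⟨SA ∪ SB, ?_, ?_⟩
    · rw [Finset.sum_union hdisjS]
      omega
    · rw [Finset.sum_union hdisjS, hpA, hpB]
  constructor
  · -- membership: PAB k = PA i + PB (k - i) for i = weight of optimal ∩ A
    obtain ⟨S, hwS, hpS⟩ := (hPAB k).1
    set SA := S ∩ A with hSAdef
    set SB := S ∩ B with hSBdef
    have hSsplit : SA ∪ SB = S := by
      rw [hSAdef, hSBdef, ← Finset.inter_union_distrib_left, hunion,
        Finset.inter_univ]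
    have hdisjS : Disjoint SA SB := hdisj.mono Finset.inter_subset_right
      Finset.inter_subset_right
    have hwsum : ∑ i ∈ SA, w i + ∑ i ∈ SB, w i = ∑ i ∈ S, w i := by
      rw [← Finset.sum_union hdisjS, hSsplit]
    set i := ∑ j ∈ SA, w j with hi
    have hik : i ≤ k := by omega
    refine ⟨i, hik, le_antisymm ?_ (hub _ ⟨i, hik, rfl⟩)⟩
    have h1 : ∑ j ∈ SA, p j ≤ PA i := (hPA i).2 ⟨SA, Finset.inter_subset_right, le_rfl, rfl⟩
    have h2 : ∑ j ∈ SB, p j ≤ PB (k - i) :=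
      (hPB (k - i)).2 ⟨SB, Finset.inter_subset_right, by omega, rfl⟩
    have : PAB k = ∑ j ∈ SA, p j + ∑ j ∈ SB, p j := by
      rw [hpS, ← Finset.sum_union hdisjS, hSsplit]
    omega
  · exact hub
end

section
/- Let f : {0,…,n} → ℤ and g : {0,…,m} → ℤ, let Δ ≥ 0, and let f̆ : {0,…,n} → ℝ and ğ : {0,…,m} → ℝ be convex functions with f̆(i) ≤ f(i) ≤ f̆(i) + Δ for all i and ğ(j) ≤ g(j) ≤ ğ(j) + Δ for all j. Let h be the min-plus convolution of f and g, and h̆ the min-plus convolution of f̆ and ğ. If a point (i,j) with 0 ≤ i ≤ n, 0 ≤ j ≤ m satisfies f̆(i) + ğ(j) > h̆(i+j) + 2Δ (i.e., (i,j) is not 2Δ-relevant), then f(i) + g(j) > h(i+j). -/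
/-- A function `φ` on `{0,…,N}` is convex if `φ(i) − φ(i−1) ≤ φ(i+1) − φ(i)`
for all `1 ≤ i ≤ N−1`. -/
def IsConvexSeq (N : ℕ) (φ : ℕ → ℝ) : Prop :=
  ∀ i, 1 ≤ i → i + 1 ≤ N → φ i - φ (i - 1) ≤ φ (i + 1) - φ i

/-- Points that are not `2Δ`-relevant can be ignored when computing the
min-plus convolution of two `Δ`-near convex functions. -/
theorem not_relevant_gt_minPlus (n m : ℕ) (f g h : ℕ → ℤ) (Δ : ℝ) (hΔ : 0 ≤ Δ)
    (fc gc hc : ℕ → ℝ)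
    (hfcvx : IsConvexSeq n fc) (hgcvx : IsConvexSeq m gc)
    (hf : ∀ i ≤ n, fc i ≤ (f i : ℝ) ∧ (f i : ℝ) ≤ fc i + Δ)
    (hg : ∀ j ≤ m, gc j ≤ (g j : ℝ) ∧ (g j : ℝ) ≤ gc j + Δ)
    (hh : ∀ k ≤ n + m,
      IsLeast {v : ℤ | ∃ i ≤ n, ∃ j ≤ m, i + j = k ∧ v = f i + g j} (h k))
    (hhc : ∀ k ≤ n + m,
      IsLeast {v : ℝ | ∃ i ≤ n, ∃ j ≤ m, i + j = k ∧ v = fc i + gc j} (hc k))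
    (i j : ℕ) (hi : i ≤ n) (hj : j ≤ m)
    (hnotrel : fc i + gc j > hc (i + j) + 2 * Δ) :
    f i + g j > h (i + j) := by
  have hk : i + j ≤ n + m := Nat.add_le_add hi hj
  obtain ⟨⟨a, ha, b, hb, hab, heq⟩, hmin⟩ := hhc (i + j) hk
  obtain ⟨_, hleast⟩ := hh (i + j) hk
  have h1 : h (i + j) ≤ f a + g b := hleast ⟨a, ha, b, hb, hab, rfl⟩
  have h2 : ((f a + g b : ℤ) : ℝ) ≤ hc (i + j) + 2 * Δ := by
    push_cast
    have := (hf a ha).2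
    have := (hg b hb).2
    rw [heq]; linarith
  have h3 : hc (i + j) + 2 * Δ < ((f i + g j : ℤ) : ℝ) := by
    push_cast
    have := (hf i hi).1
    have := (hg j hj).1
    linarith
  have : ((h (i + j) : ℤ) : ℝ) < ((f i + g j : ℤ) : ℝ) := by
    calc ((h (i + j) : ℤ) : ℝ) ≤ ((f a + g b : ℤ) : ℝ) := by exact_mod_cast h1
    _ ≤ hc (i + j) + 2 * Δ := h2
    _ < _ := h3
  exact_mod_cast this
end

section
/- Let f̆ : {0,…,n} → ℝ and ğ : {0,…,m} → ℝ be convex, let h̆ be their min-plus convolution, and let δ ≥ 0. For each k ∈ {0,…,n+m}, let i⁻_k be the minimal i with max(0, k−m) ≤ i ≤ min(n, k) such that f̆(i) + ğ(k−i) ≤ h̆(k) + δ (such an i exists since h̆(k) has a witness). Then for every k ∈ {0,…,n+m−1}, i⁻_{k+1} ∈ {i⁻_k, i⁻_k + 1}; in particular the set P⁻_δ = {(i⁻_k, k − i⁻_k) : 0 ≤ k ≤ n+m} is a monotone path. -/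
lemma isConvexSeq_diff_mono (N : ℕ) (φ : ℕ → ℝ) (h : IsConvexSeq N φ) :
    ∀ j j', j ≤ j' → j' + 1 ≤ N → φ (j + 1) - φ j ≤ φ (j' + 1) - φ j' := by
  intro j j' hle hN
  induction j' with
  | zero =>
      have : j = 0 := by omega
      simp [this]
  | succ p ih =>
      rcases Nat.eq_or_lt_of_le hle with heq | hlt
      · rw [heq]
      · have h1 := ih (by omega) (by omega)
        have h2 := h (p + 1) (by omega) (by omega)
        simp only [Nat.add_sub_cancel] at h2
        linarith

/-- The minimal `δ`-relevant indices form a monotone path: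
`i⁻_{k+1} ∈ {i⁻_k, i⁻_k + 1}` for all `k`. Here `k - m` is truncated natural
subtraction, i.e. `max (0, k - m)`. -/
theorem minimal_relevant_monotone_path (n m : ℕ) (fc gc hc : ℕ → ℝ) (δ : ℝ) (hδ : 0 ≤ δ)
    (hfcvx : IsConvexSeq n fc) (hgcvx : IsConvexSeq m gc)
    (hhc : ∀ k ≤ n + m,
      IsLeast {v : ℝ | ∃ i ≤ n, ∃ j ≤ m, i + j = k ∧ v = fc i + gc j} (hc k))
    (imin : ℕ → ℕ)
    (himin : ∀ k ≤ n + m,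
      (k - m ≤ imin k ∧ imin k ≤ min n k ∧ fc (imin k) + gc (k - imin k) ≤ hc k + δ) ∧
      ∀ i, k - m ≤ i → i ≤ min n k → fc i + gc (k - i) ≤ hc k + δ → imin k ≤ i) :
    ∀ k, k + 1 ≤ n + m → imin (k + 1) = imin k ∨ imin (k + 1) = imin k + 1 := by
  intro k hk
  have hk' : k ≤ n + m := by omega
  obtain ⟨⟨ha1, ha2, ha3⟩, haMin⟩ := himin k hk'
  obtain ⟨⟨hb1, hb2, hb3⟩, hbMin⟩ := himin (k + 1) hk
  set a := imin k with hadef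
  set b := imin (k + 1) with hbdef
  obtain ⟨hck_mem, hck_lb⟩ := hhc k hk'
  obtain ⟨hck1_mem, hck1_lb⟩ := hhc (k + 1) hk
  obtain ⟨i₀, hi₀n, j₀, hj₀m, hij₀, hval₀⟩ := hck_mem
  obtain ⟨i₁, hi₁n, j₁, hj₁m, hij₁, hval₁⟩ := hck1_mem
  -- a ≤ i₀ : i₀ is a minimizer of hc k, hence δ-relevant
  have ha_le_i0 : a ≤ i₀ := by
    apply haMin i₀ (by omega) (by omega)
    have : k - i₀ = j₀ := by omega
    rw [this, ← hval₀]
    linarith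
  -- b ≤ i₁
  have hb_le_i1 : b ≤ i₁ := by
    apply hbMin i₁ (by omega) (by omega)
    have : k + 1 - i₁ = j₁ := by omega
    rw [this, ← hval₁]
    linarith
  have hmono_g := isConvexSeq_diff_mono m gc hgcvx
  have hmono_f := isConvexSeq_diff_mono n fc hfcvx
  -- Part 1 : a ≤ b
  have part1 : a ≤ b := by
    by_contra hcon
    push_neg at hcon
    -- b < a; show b is δ-relevant at level k, contradicting minimality of a
    have hba : b < a := hcon
    have hbk : b ≤ k := by omega
    have hstep : fc b + gc (k - b) ≤ hc k + δ := by
      -- hc (k+1) ≤ fc i₀ + gc (j₀ + 1)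
      have hj₀1 : j₀ + 1 ≤ m := by omega
      have h1 : hc (k + 1) ≤ fc i₀ + gc (j₀ + 1) :=
        hck1_lb ⟨i₀, hi₀n, j₀ + 1, hj₀1, by omega, rfl⟩
      -- g-difference monotonicity
      have h2 : gc (j₀ + 1) - gc j₀ ≤ gc (k - b + 1) - gc (k - b) := by
        apply hmono_g j₀ (k - b) (by omega) (by omega)
      have h3 : fc b + gc (k - b + 1) ≤ hc (k + 1) + δ := by
        have : k + 1 - b = k - b + 1 := by omega
        rw [← this]; exact hb3
      have hval₀' : hc k = fc i₀ + gc j₀ := hval₀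
      linarith
    have := haMin b (by omega) (by omega) hstep
    omega
  -- Part 2 : b ≤ a + 1
  have part2 : b ≤ a + 1 := by
    by_contra hcon
    push_neg at hcon
    have hab : a + 2 ≤ b := hcon
    have hi₁1 : 1 ≤ i₁ := by omega
    have hak : a ≤ k := by omega
    have hstep : fc (a + 1) + gc (k + 1 - (a + 1)) ≤ hc (k + 1) + δ := by
      have heq : k + 1 - (a + 1) = k - a := by omega
      rw [heq]
      -- hc k ≤ fc (i₁ - 1) + gc j₁
      have h1 : hc k ≤ fc (i₁ - 1) + gc j₁ :=
        hck_lb ⟨i₁ - 1, by omega, j₁, hj₁m, by omega, rfl⟩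
      -- f-difference monotonicity
      have h2 : fc (a + 1) - fc a ≤ fc (i₁ - 1 + 1) - fc (i₁ - 1) := by
        apply hmono_f a (i₁ - 1) (by omega) (by omega)
      have heq2 : i₁ - 1 + 1 = i₁ := by omega
      rw [heq2] at h2
      have hval₁' : hc (k + 1) = fc i₁ + gc j₁ := hval₁
      linarith
    have := hbMin (a + 1) (by omega) (by omega) hstep
    omega
  omega
end

section
/- Let f̆ : {0,…,n} → ℝ and ğ : {0,…,m} → ℝ be convex, let h̆ be their min-plus convolution, and let δ ≥ 0. For each k ∈ {0,…,n+m}, let i⁺_k be the maximal i with max(0, k−m) ≤ i ≤ min(n, k) such that f̆(i) + ğ(k−i) ≤ h̆(k) + δ (such an i exists since h̆(k) has a witness). Then for every k ∈ {0,…,n+m−1}, i⁺_{k+1} ∈ {i⁺_k, i⁺_k + 1}; in particular the set P⁺_δ = {(i⁺_k, k − i⁺_k) : 0 ≤ k ≤ n+m} is a monotone path. -/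
lemma convex_incr {N : ℕ} {φ : ℕ → ℝ} (h : IsConvexSeq N φ) :
    ∀ p q, p ≤ q → q + 1 ≤ N → φ (p + 1) - φ p ≤ φ (q + 1) - φ q := by
  intro p q
  induction q with
  | zero =>
    intro hpq _
    have : p = 0 := Nat.le_zero.mp hpq
    simp [this]
  | succ q ih =>
    intro hpq hN
    rcases Nat.lt_or_ge p (q + 1) with hlt | hge
    · have h1 := ih (Nat.lt_succ_iff.mp hlt) (by omega)
      have h2 := h (q + 1) (by omega) (by omega)
      have : q + 1 - 1 = q := by omega
      rw [this] at h2
      linarith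
    · have : p = q + 1 := by omega
      simp [this]

/-- The maximal `δ`-relevant indices form a monotone path:
`i⁺_{k+1} ∈ {i⁺_k, i⁺_k + 1}` for all `k`. Here `k - m` is truncated natural
subtraction, i.e. `max (0, k - m)`. -/
theorem maximal_relevant_monotone_path (n m : ℕ) (fc gc hc : ℕ → ℝ) (δ : ℝ) (hδ : 0 ≤ δ)
    (hfcvx : IsConvexSeq n fc) (hgcvx : IsConvexSeq m gc)
    (hhc : ∀ k ≤ n + m,
      IsLeast {v : ℝ | ∃ i ≤ n, ∃ j ≤ m, i + j = k ∧ v = fc i + gc j} (hc k))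
    (imax : ℕ → ℕ)
    (himax : ∀ k ≤ n + m,
      (k - m ≤ imax k ∧ imax k ≤ min n k ∧ fc (imax k) + gc (k - imax k) ≤ hc k + δ) ∧
      ∀ i, k - m ≤ i → i ≤ min n k → fc i + gc (k - i) ≤ hc k + δ → i ≤ imax k) :
    ∀ k, k + 1 ≤ n + m → imax (k + 1) = imax k ∨ imax (k + 1) = imax k + 1 := by
  intro k hk
  obtain ⟨⟨hka, hka2, hval_a⟩, hmax_k⟩ := himax k (by omega)
  obtain ⟨⟨hkb, hkb2, hval_b⟩, hmax_k1⟩ := himax (k + 1) hk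
  set a := imax k with ha
  set b := imax (k + 1) with hb
  have han : a ≤ n := le_trans hka2 (min_le_left _ _)
  have hak : a ≤ k := le_trans hka2 (min_le_right _ _)
  have hbn : b ≤ n := le_trans hkb2 (min_le_left _ _)
  have hbk : b ≤ k + 1 := le_trans hkb2 (min_le_right _ _)
  -- a ≤ b
  have hab : a ≤ b := by
    by_contra hcon
    push_neg at hcon    -- b < a
    -- witness c for hc (k+1)
    obtain ⟨c, hcn, j, hjm, hcj, hcv⟩ := (hhc (k + 1) hk).1
    have hjc : j = k + 1 - c := by omega
    have hck1 : c ≤ k + 1 := by omega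
    have hcb : c ≤ b := by
      apply hmax_k1 c (by omega) (by omega)
      rw [← hjc, ← hcv]
      linarith
    have hca : c < a := lt_of_le_of_lt hcb hcon
    -- hc k ≤ fc c + gc (k - c)
    have hlow : hc k ≤ fc c + gc (k - c) := by
      apply (hhc k (by omega)).2
      exact ⟨c, hcn, k - c, by omega, by omega, rfl⟩
    -- convexity of g
    have hcvg := convex_incr hgcvx (k - a) (k - c) (by omega) (by omega)
    have e1 : k - a + 1 = k + 1 - a := by omega
    have e2 : k - c + 1 = k + 1 - c := by omega
    rw [e1, e2] at hcvg
    have hrel : fc a + gc (k + 1 - a) ≤ hc (k + 1) + δ := by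
      have : hc (k + 1) = fc c + gc (k + 1 - c) := by rw [hcv, hjc]
      linarith
    have : a ≤ b := hmax_k1 a (by omega) (by omega) hrel
    omega
  -- b ≤ a + 1
  have hba : b ≤ a + 1 := by
    by_contra hcon
    push_neg at hcon    -- a + 2 ≤ b
    -- witness d for hc k
    obtain ⟨d, hdn, j, hjm, hdj, hdv⟩ := (hhc k (by omega)).1
    have hjd : j = k - d := by omega
    have hdk : d ≤ k := by omega
    have hda : d ≤ a := by
      apply hmax_k d (by omega) (by omega)
      rw [← hjd, ← hdv]
      linarith
    -- hc (k+1) ≤ fc (d+1) + gc (k - d)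
    have hup : hc (k + 1) ≤ fc (d + 1) + gc (k - d) := by
      apply (hhc (k + 1) hk).2
      exact ⟨d + 1, by omega, k - d, by omega, by omega, rfl⟩
    -- convexity of f
    have hcvf := convex_incr hfcvx d (b - 1) (by omega) (by omega)
    have e3 : b - 1 + 1 = b := by omega
    rw [e3] at hcvf
    have e4 : k - (b - 1) = k + 1 - b := by omega
    have hrel : fc (b - 1) + gc (k - (b - 1)) ≤ hc k + δ := by
      rw [e4]
      have hhk : hc k = fc d + gc (k - d) := by rw [hdv, hjd]
      have hbval : fc b + gc (k + 1 - b) ≤ hc (k + 1) + δ := hval_b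
      linarith
    have : b - 1 ≤ a := hmax_k (b - 1) (by omega) (by omega) hrel
    omega
  omega
end

section
/- Let f̆ : {0,…,n} → ℝ and ğ : {0,…,m} → ℝ be convex, let h̆ be their min-plus convolution, and let δ ≥ 0. Fix k ∈ {0,…,n+m} and indices i₁ ≤ i ≤ i₂ with max(0, k−m) ≤ i₁ and i₂ ≤ min(n, k). If both (i₁, k−i₁) and (i₂, k−i₂) are δ-relevant, then (i, k−i) is δ-relevant; consequently, on each diagonal the set of δ-relevant points forms a contiguous interval. -/
lemma convex_le_max (F : ℕ → ℝ) (a b : ℕ)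
    (hcvx : ∀ t, a + 1 ≤ t → t + 1 ≤ b → F t - F (t - 1) ≤ F (t + 1) - F t)
    {i : ℕ} (hai : a ≤ i) (hib : i ≤ b) : F i ≤ max (F a) (F b) := by
  set d : ℕ → ℝ := fun t => F (t + 1) - F t with hd
  have hmono : ∀ s t, a ≤ s → s ≤ t → t + 1 ≤ b → d s ≤ d t := by
    intro s t hs hst htb
    induction t, hst using Nat.le_induction with
    | base => exact le_refl _
    | succ t hst ih =>
      have h1 : d s ≤ d t := ih (by omega)
      have h2 := hcvx (t + 1) (by omega) (by omega)
      simp only [Nat.add_sub_cancel] at h2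
      have : d t ≤ d (t + 1) := by simp only [hd]; linarith
      linarith
  have tel : ∀ x y : ℕ, x ≤ y → ∑ s ∈ Finset.Ico x y, d s = F y - F x := by
    intro x y hxy
    rw [Finset.sum_Ico_eq_sum_range]
    calc ∑ s ∈ Finset.range (y - x), d (x + s)
        = ∑ s ∈ Finset.range (y - x), (F (x + (s + 1)) - F (x + s)) := by
          refine Finset.sum_congr rfl fun s _ => ?_
          show F (x + s + 1) - F (x + s) = _
          rw [show x + s + 1 = x + (s + 1) from by omega]
      _ = F (x + (y - x)) - F (x + 0) := Finset.sum_range_sub (fun t => F (x + t)) _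
      _ = F y - F x := by rw [Nat.add_sub_cancel' hxy, Nat.add_zero]
  rcases le_or_gt (F i) (F a) with h | h
  · exact le_max_of_le_left h
  · have tel1 : ∑ s ∈ Finset.Ico a i, d s = F i - F a := tel a i hai
    have hpos : (0 : ℝ) < ∑ s ∈ Finset.Ico a i, d s := by rw [tel1]; linarith
    have : ∑ s ∈ Finset.Ico a i, (0 : ℝ) < ∑ s ∈ Finset.Ico a i, d s := by
      simpa using hpos
    obtain ⟨t, ht, htpos⟩ := Finset.exists_lt_of_sum_lt this
    rw [Finset.mem_Ico] at ht
    have tel2 : ∑ s ∈ Finset.Ico i b, d s = F b - F i := tel i b hib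
    have hnn : (0 : ℝ) ≤ ∑ s ∈ Finset.Ico i b, d s := by
      apply Finset.sum_nonneg
      intro s hs
      rw [Finset.mem_Ico] at hs
      have := hmono t s (by omega) (by omega) (by omega)
      linarith
    rw [tel2] at hnn
    exact le_max_of_le_right (by linarith)

/-- On each diagonal, the set of `δ`-relevant points forms a contiguous
interval: if `(i₁, k−i₁)` and `(i₂, k−i₂)` are `δ`-relevant and `i₁ ≤ i ≤ i₂`, then
`(i, k−i)` is `δ`-relevant. Here `k - m` is truncated natural subtraction. -/
theorem relevant_points_contiguous (n m : ℕ) (fc gc hc : ℕ → ℝ) (δ : ℝ) (hδ : 0 ≤ δ)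
    (hfcvx : IsConvexSeq n fc) (hgcvx : IsConvexSeq m gc)
    (hhc : ∀ k ≤ n + m,
      IsLeast {v : ℝ | ∃ i ≤ n, ∃ j ≤ m, i + j = k ∧ v = fc i + gc j} (hc k))
    (k i i₁ i₂ : ℕ) (hk : k ≤ n + m)
    (hi₁ : i₁ ≤ i) (hi₂ : i ≤ i₂) (hlo : k - m ≤ i₁) (hhi : i₂ ≤ min n k)
    (hrel₁ : fc i₁ + gc (k - i₁) ≤ hc k + δ)
    (hrel₂ : fc i₂ + gc (k - i₂) ≤ hc k + δ) :
    fc i + gc (k - i) ≤ hc k + δ := by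
  have hn : i₂ ≤ n := le_trans hhi (min_le_left _ _)
  have hkk : i₂ ≤ k := le_trans hhi (min_le_right _ _)
  have hcvx : ∀ t, i₁ + 1 ≤ t → t + 1 ≤ i₂ →
      (fc t + gc (k - t)) - (fc (t-1) + gc (k - (t-1))) ≤
      (fc (t+1) + gc (k - (t+1))) - (fc t + gc (k - t)) := by
    intro t h1 h2
    have hf := hfcvx t (by omega) (by omega)
    set j := k - t with hj
    have e1 : k - (t - 1) = j + 1 := by omega
    have e2 : k - (t + 1) = j - 1 := by omega
    have hjm : j + 1 ≤ m := by omega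
    have hg := hgcvx j (by omega) hjm
    rw [e1, e2]
    linarith
  have := convex_le_max (fun t => fc t + gc (k - t)) i₁ i₂ hcvx hi₁ hi₂
  rcases max_cases (fc i₁ + gc (k - i₁)) (fc i₂ + gc (k - i₂)) with ⟨he, _⟩ | ⟨he, _⟩ <;>
    simp only [he] at this <;> linarith
end

section
/- Let f : {0,…,n} → ℤ and g : {0,…,m} → ℤ, let Δ ≥ 0, and let f̆ : {0,…,n} → ℝ and ğ : {0,…,m} → ℝ be convex with f̆(i) ≤ f(i) ≤ f̆(i) + Δ for all i and ğ(j) ≤ g(j) ≤ ğ(j) + Δ for all j; let h̆ be the min-plus convolution of f̆ and ğ. Let I = {i_A,…,i_B} ⊆ {0,…,n} and J = {j_A,…,j_B} ⊆ {0,…,m} be intervals of equal length (i_B − i_A = j_B − j_A). If every point (i,j) ∈ I × J is 2Δ-relevant, i.e., f̆(i) + ğ(j) ≤ h̆(i+j) + 2Δ, then there exist reals a, b, c such that |f(i) − (a·i + b)| ≤ 2Δ for all i ∈ I and |g(j) − (a·j + c)| ≤ 2Δ for all j ∈ J. -/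
private lemma convex_step (N : ℕ) (φ : ℕ → ℝ) (h : IsConvexSeq N φ) :
    ∀ t, t + 1 ≤ N → ∀ s, s ≤ t → φ (s+1) - φ s ≤ φ (t+1) - φ t := by
  intro t
  induction t with
  | zero =>
    intro _ s hs
    have hs0 : s = 0 := by omega
    subst hs0; exact le_refl _
  | succ t ih =>
    intro hN s hs
    rcases Nat.lt_or_ge s (t+1) with h' | h'
    · have h1 := ih (by omega) s (by omega)
      have h2 := h (t+1) (by omega) hN
      have h3 : t + 1 - 1 = t := by omega
      rw [h3] at h2
      linarith
    · have hs1 : s = t + 1 := by omega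
      subst hs1; exact le_refl _

private lemma upper_sum (N p : ℕ) (φ : ℕ → ℝ) (h : IsConvexSeq N φ) :
    ∀ k, p + k + 1 ≤ N → φ (p+k+1) - φ p ≤ ((k:ℝ)+1) * (φ (p+k+1) - φ (p+k)) := by
  intro k
  induction k with
  | zero => intro _; norm_num
  | succ k ih =>
    intro hN
    have h1 := ih (by omega)
    have h2 := convex_step N φ h (p+k+1) (by omega) (p+k) (by omega)
    have h3 : ((k:ℝ)+1) * (φ (p+k+1) - φ (p+k)) ≤ ((k:ℝ)+1) * (φ (p+k+1+1) - φ (p+k+1)) :=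
      mul_le_mul_of_nonneg_left h2 (by positivity)
    push_cast
    show φ (p+k+1+1) - φ p ≤ ((k:ℝ)+1+1) * (φ (p+k+1+1) - φ (p+k+1))
    linarith

private lemma lower_sum (N p : ℕ) (φ : ℕ → ℝ) (h : IsConvexSeq N φ) :
    ∀ k, p + k ≤ N → (k:ℝ) * (φ (p+1) - φ p) ≤ φ (p+k) - φ p := by
  intro k
  induction k with
  | zero => intro _; norm_num
  | succ k ih =>
    intro hN
    have h1 := ih (by omega)
    have h2 := convex_step N φ h (p+k) (by omega) p (by omega)
    push_cast
    show ((k:ℝ)+1) * (φ (p+1) - φ p) ≤ φ (p+k+1) - φ p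
    linarith

private lemma chord (N : ℕ) (φ : ℕ → ℝ) (h : IsConvexSeq N φ) (p k l : ℕ)
    (hN : p + k + l ≤ N) :
    ((k:ℝ) + l) * (φ (p+k) - φ p) ≤ (k:ℝ) * (φ (p+k+l) - φ p) := by
  rcases Nat.eq_zero_or_pos k with hk | hk
  · subst hk; simp
  rcases Nat.eq_zero_or_pos l with hl | hl
  · subst hl; simp
  obtain ⟨k', rfl⟩ : ∃ k', k = k' + 1 := ⟨k - 1, by omega⟩
  have h1 := upper_sum N p φ h k' (by omega)
  have h2 := lower_sum N (p+k'+1) φ h l (by omega)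
  have h3 := convex_step N φ h (p+k'+1) (by omega) (p+k') (by omega)
  have q1 : (l:ℝ) * (φ (p+k'+1) - φ p) ≤ (l:ℝ) * (((k':ℝ)+1) * (φ (p+k'+1) - φ (p+k'))) :=
    mul_le_mul_of_nonneg_left h1 (by positivity)
  have q2 : (l:ℝ) * (((k':ℝ)+1) * (φ (p+k'+1) - φ (p+k'))) ≤
      (l:ℝ) * (((k':ℝ)+1) * (φ (p+k'+1+1) - φ (p+k'+1))) := by
    apply mul_le_mul_of_nonneg_left _ (by positivity)
    exact mul_le_mul_of_nonneg_left h3 (by positivity)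
  have q3 : ((k':ℝ)+1) * ((l:ℝ) * (φ (p+k'+1+1) - φ (p+k'+1))) ≤
      ((k':ℝ)+1) * (φ (p+k'+1+l) - φ (p+k'+1)) :=
    mul_le_mul_of_nonneg_left h2 (by positivity)
  push_cast
  show (((k':ℝ)+1) + l) * (φ (p+k'+1) - φ p) ≤ ((k':ℝ)+1) * (φ (p+k'+1+l) - φ p)
  nlinarith [q1, q2, q3]

private lemma aux_side (n m : ℕ) (f : ℕ → ℤ) (Δ : ℝ) (hΔ : 0 ≤ Δ)
    (fc gc hc : ℕ → ℝ) (hfcvx : IsConvexSeq n fc) (hgcvx : IsConvexSeq m gc)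
    (hf : ∀ i ≤ n, fc i ≤ (f i : ℝ) ∧ (f i : ℝ) ≤ fc i + Δ)
    (iA jA L : ℕ) (hL : 0 < L) (hiB : iA + L ≤ n) (hjB : jA + L ≤ m)
    (hlow : ∀ i ≤ n, ∀ j ≤ m, i + j = iA + jA + L → hc (iA + jA + L) ≤ fc i + gc j)
    (hrel1 : fc (iA+L) + gc jA ≤ hc (iA + jA + L) + 2*Δ)
    (hrel2 : fc iA + gc (jA+L) ≤ hc (iA + jA + L) + 2*Δ)
    (a : ℝ) (ha : a * (2*(L:ℝ)) = (fc (iA+L) - fc iA) + (gc (jA+L) - gc jA)) :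
    ∀ i, iA ≤ i → i ≤ iA + L → |(f i : ℝ) - (a * i + (fc iA - a * iA))| ≤ 2*Δ := by
  intro i h1 h2
  obtain ⟨t, rfl⟩ : ∃ t, i = iA + t := ⟨i - iA, by omega⟩
  have ht : t ≤ L := by omega
  have hLr : (0:ℝ) < (L:ℝ) := by exact_mod_cast hL
  have htr0 : (0:ℝ) ≤ (t:ℝ) := by positivity
  have htrL : (t:ℝ) ≤ (L:ℝ) := by exact_mod_cast ht
  -- chord for fc on [iA, iA+L] at iA+t
  have C1 : ((L:ℝ)) * (fc (iA+t) - fc iA) ≤ (t:ℝ) * (fc (iA+L) - fc iA) := by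
    have := chord n fc hfcvx iA t (L - t) (by omega)
    have e : iA + t + (L - t) = iA + L := by omega
    rw [e] at this
    have ec : ((L - t : ℕ):ℝ) = (L:ℝ) - (t:ℝ) := by
      push_cast [ht]; ring
    rw [ec] at this
    linarith
  -- chord for gc on [jA, jA+L] at jA+(L-t)
  have C2 : ((L:ℝ)) * (gc (jA+(L-t)) - gc jA) ≤ ((L:ℝ) - (t:ℝ)) * (gc (jA+L) - gc jA) := by
    have := chord m gc hgcvx jA (L - t) t (by omega)
    have e : jA + (L - t) + t = jA + L := by omega
    rw [e] at this
    have ec : ((L - t : ℕ):ℝ) = (L:ℝ) - (t:ℝ) := by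
      push_cast [ht]; ring
    rw [ec] at this
    linarith
  have H3 : hc (iA + jA + L) ≤ fc (iA+t) + gc (jA+(L-t)) :=
    hlow (iA+t) (by omega) (jA+(L-t)) (by omega) (by omega)
  have hfi := hf (iA+t) (by omega)
  -- multiplied-form bounds
  have e1 : fc iA + gc (jA+L) ≤ fc (iA+t) + gc (jA+(L-t)) + 2*Δ := by linarith
  have e2 : fc (iA+L) + gc jA ≤ fc (iA+t) + gc (jA+(L-t)) + 2*Δ := by linarith
  have e1' := mul_le_mul_of_nonneg_left e1 hLr.le
  have e2' := mul_le_mul_of_nonneg_left e2 hLr.le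
  have LB1 : (L:ℝ) * fc iA + (t:ℝ) * (gc (jA+L) - gc jA) - 2*Δ*(L:ℝ) ≤ (L:ℝ) * fc (iA+t) := by
    linarith [e1', C2]
  have LB2 : (L:ℝ) * fc (iA+L) - ((L:ℝ) - (t:ℝ)) * (gc (jA+L) - gc jA) - 2*Δ*(L:ℝ)
      ≤ (L:ℝ) * fc (iA+t) := by
    linarith [e2', C2]
  have UB : (L:ℝ) * (f (iA+t) : ℝ) ≤ (L:ℝ) * fc iA + (t:ℝ) * (fc (iA+L) - fc iA) + Δ*(L:ℝ) := by
    have := mul_le_mul_of_nonneg_left hfi.2 hLr.le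
    linarith [C1]
  have hFG : (fc (iA+L) - fc iA) - (gc (jA+L) - gc jA) ≤ 2*Δ := by
    have H2 : hc (iA + jA + L) ≤ fc iA + gc (jA+L) :=
      hlow iA (by omega) (jA+L) (by omega) (by omega)
    linarith
  have hflow : (L:ℝ) * fc (iA+t) ≤ (L:ℝ) * (f (iA+t) : ℝ) :=
    mul_le_mul_of_nonneg_left hfi.1 hLr.le
  have hatr : (2*(L:ℝ)) * (a * (t:ℝ))
      = ((fc (iA+L) - fc iA) + (gc (jA+L) - gc jA)) * (t:ℝ) := by
    linear_combination (t:ℝ) * ha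
  have h2L : (0:ℝ) < 2*(L:ℝ) := by linarith
  have hline : a * ((iA+t : ℕ):ℝ) + (fc iA - a * iA) = fc iA + a * (t:ℝ) := by
    push_cast; ring
  rw [hline, abs_le]
  constructor
  · -- lower bound: fc iA + a*t - 2Δ ≤ f i
    have key : (2*(L:ℝ)) * (fc iA + a * (t:ℝ) - 2*Δ) ≤ (2*(L:ℝ)) * ((f (iA+t) : ℝ)) := by
      rcases le_total (fc (iA+L) - fc iA) (gc (jA+L) - gc jA) with hcase | hcase
      · have hp : 0 ≤ (t:ℝ) * ((gc (jA+L) - gc jA) - (fc (iA+L) - fc iA)) :=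
          mul_nonneg htr0 (by linarith)
        linarith [LB1, hflow, hatr, hp]
      · have hp : 0 ≤ (2*(L:ℝ) - (t:ℝ)) * ((fc (iA+L) - fc iA) - (gc (jA+L) - gc jA)) :=
          mul_nonneg (by linarith) (by linarith)
        linarith [LB2, hflow, hatr, hp]
    have := le_of_mul_le_mul_left key h2L
    linarith
  · -- upper bound: f i ≤ fc iA + a*t + 2Δ
    have hkey2 : (t:ℝ) * ((fc (iA+L) - fc iA) - (gc (jA+L) - gc jA)) ≤ 2*Δ*(L:ℝ) := by
      rcases le_total (fc (iA+L) - fc iA) (gc (jA+L) - gc jA) with hcase | hcase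
      · have hp : (t:ℝ) * ((fc (iA+L) - fc iA) - (gc (jA+L) - gc jA)) ≤ 0 :=
          mul_nonpos_of_nonneg_of_nonpos htr0 (by linarith)
        linarith
      · have h5 : ((L:ℝ) - (t:ℝ)) * ((fc (iA+L) - fc iA) - (gc (jA+L) - gc jA)) ≥ 0 :=
          mul_nonneg (by linarith) (by linarith)
        have h6 : (L:ℝ) * ((fc (iA+L) - fc iA) - (gc (jA+L) - gc jA)) ≤ (L:ℝ) * (2*Δ) :=
          mul_le_mul_of_nonneg_left hFG hLr.le
        linarith
    have key : (2*(L:ℝ)) * ((f (iA+t) : ℝ)) ≤ (2*(L:ℝ)) * (fc iA + a * (t:ℝ) + 2*Δ) := by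
      linarith [UB, hkey2, hatr]
    have := le_of_mul_le_mul_left key h2L
    linarith

/-- Near-linearity inside a fully `2Δ`-relevant box: if every point of
`I × J` (with `I`, `J` intervals of equal length) is `2Δ`-relevant, then on `I` and `J`
the functions `f` and `g` are within `2Δ` of linear functions with a common slope `a`. -/
theorem near_linearity_in_relevant_region (n m : ℕ) (f g : ℕ → ℤ) (Δ : ℝ) (hΔ : 0 ≤ Δ)
    (fc gc hc : ℕ → ℝ)
    (hfcvx : IsConvexSeq n fc) (hgcvx : IsConvexSeq m gc)
    (hf : ∀ i ≤ n, fc i ≤ (f i : ℝ) ∧ (f i : ℝ) ≤ fc i + Δ)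
    (hg : ∀ j ≤ m, gc j ≤ (g j : ℝ) ∧ (g j : ℝ) ≤ gc j + Δ)
    (hhc : ∀ k ≤ n + m,
      IsLeast {v : ℝ | ∃ i ≤ n, ∃ j ≤ m, i + j = k ∧ v = fc i + gc j} (hc k))
    (iA iB jA jB : ℕ) (hiAB : iA ≤ iB) (hjAB : jA ≤ jB)
    (hiB : iB ≤ n) (hjB : jB ≤ m) (hlen : iB - iA = jB - jA)
    (hrel : ∀ i, iA ≤ i → i ≤ iB → ∀ j, jA ≤ j → j ≤ jB →
      fc i + gc j ≤ hc (i + j) + 2 * Δ) :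
    ∃ a b c : ℝ,
      (∀ i, iA ≤ i → i ≤ iB → |(f i : ℝ) - (a * i + b)| ≤ 2 * Δ) ∧
      (∀ j, jA ≤ j → j ≤ jB → |(g j : ℝ) - (a * j + c)| ≤ 2 * Δ) := by
  rcases Nat.eq_zero_or_pos (iB - iA) with hL0 | hLpos
  · -- degenerate case: single points
    have hii : iB = iA := by omega
    have hjj : jB = jA := by omega
    refine ⟨0, ((f iA : ℤ) : ℝ), ((g jA : ℤ) : ℝ), ?_, ?_⟩
    · intro i h1 h2
      have : i = iA := by omega
      subst this
      simp
      linarith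
    · intro j h1 h2
      have : j = jA := by omega
      subst this
      simp
      linarith
  · obtain ⟨L, rfl⟩ : ∃ L, iB = iA + L := ⟨iB - iA, by omega⟩
    have hLpos : 0 < L := by omega
    have hjB2 : jB = jA + L := by omega
    subst hjB2
    have hk : iA + jA + L ≤ n + m := by omega
    set a : ℝ := ((fc (iA+L) - fc iA) + (gc (jA+L) - gc jA)) / (2*(L:ℝ)) with hadef
    have hLr : (0:ℝ) < (L:ℝ) := by exact_mod_cast hLpos
    have ha : a * (2*(L:ℝ)) = (fc (iA+L) - fc iA) + (gc (jA+L) - gc jA) := by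
      rw [hadef]; field_simp
    refine ⟨a, fc iA - a * iA, gc jA - a * jA, ?_, ?_⟩
    · -- f side
      apply aux_side n m f Δ hΔ fc gc hc hfcvx hgcvx hf iA jA L hLpos (by omega) (by omega)
        ?_ ?_ ?_ a ha
      · intro i hi j hj hij
        exact (hhc (iA+jA+L) hk).2 ⟨i, hi, j, hj, hij, rfl⟩
      · have := hrel (iA+L) (by omega) le_rfl jA le_rfl (by omega)
        have e : iA + L + jA = iA + jA + L := by omega
        rwa [e] at this
      · have := hrel iA le_rfl (by omega) (jA+L) (by omega) le_rfl
        have e : iA + (jA + L) = iA + jA + L := by omega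
        rwa [e] at this
    · -- g side (apply aux_side with roles of f and g swapped)
      apply aux_side m n g Δ hΔ gc fc hc hgcvx hfcvx hg jA iA L hLpos (by omega) (by omega)
        ?_ ?_ ?_ a (by linarith)
      · intro j hj i hi hij
        have := (hhc (iA+jA+L) hk).2 ⟨i, hi, j, hj, by omega, rfl⟩
        have e : jA + iA + L = iA + jA + L := by omega
        rw [e]
        linarith
      · have := hrel iA le_rfl (by omega) (jA+L) (by omega) le_rfl
        have e : iA + (jA + L) = jA + iA + L := by omega
        rw [e] at this
        linarith
      · have := hrel (iA+L) (by omega) le_rfl jA le_rfl (by omega)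
        have e : iA + L + jA = jA + iA + L := by omega
        rw [e] at this
        linarith
end

section
/- Let I and J be finite intervals of integers, let Δ ≥ 0 be a real, and let f : I → ℤ and g : J → ℤ be functions such that for some reals a, b, c we have |f(i) − (a·i + b)| ≤ 2Δ for all i ∈ I and |g(j) − (a·j + c)| ≤ 2Δ for all j ∈ J. Then the sumset {(i, f(i)) : i ∈ I} + {(j, g(j)) : j ∈ J} ⊆ ℤ² has cardinality at most (|I| + |J| − 1) · (8Δ + 1). -/
open Pointwise

/-- If `f` on the integer interval `I` and `g` on the integer interval
`J` are within `2Δ` of linear functions with a common slope `a`, then the sumset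
`{(i, f i) : i ∈ I} + {(j, g j) : j ∈ J} ⊆ ℤ²` has size at most `(|I| + |J| − 1)(8Δ + 1)`. -/
theorem sumset_small_of_near_linear (iA iB jA jB : ℤ) (Δ a b c : ℝ) (hΔ : 0 ≤ Δ)
    (f g : ℤ → ℤ)
    (hf : ∀ i ∈ Finset.Icc iA iB, |(f i : ℝ) - (a * i + b)| ≤ 2 * Δ)
    (hg : ∀ j ∈ Finset.Icc jA jB, |(g j : ℝ) - (a * j + c)| ≤ 2 * Δ) :
    (((((Finset.Icc iA iB).image fun i => (i, f i)) +
        ((Finset.Icc jA jB).image fun j => (j, g j))) : Finset (ℤ × ℤ)).card : ℝ) ≤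
      (((Finset.Icc iA iB).card + (Finset.Icc jA jB).card - 1 : ℕ) : ℝ) * (8 * Δ + 1) := by
  by_cases hI : iA ≤ iB
  · by_cases hJ : jA ≤ jB
    · set F : ℤ → Finset (ℤ × ℤ) := fun s =>
        ({s} : Finset ℤ) ×ˢ Finset.Icc ⌈a * s + b + c - 4 * Δ⌉ ⌊a * s + b + c + 4 * Δ⌋ with hF
      have hsub : (((Finset.Icc iA iB).image fun i => (i, f i)) +
          ((Finset.Icc jA jB).image fun j => (j, g j))) ⊆
          (Finset.Icc (iA + jA) (iB + jB)).biUnion F := by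
        intro p hp
        rw [Finset.mem_add] at hp
        obtain ⟨x, hx, y, hy, rfl⟩ := hp
        simp only [Finset.mem_image] at hx hy
        obtain ⟨i, hi, rfl⟩ := hx
        obtain ⟨j, hj, rfl⟩ := hy
        have hi' := Finset.mem_Icc.1 hi
        have hj' := Finset.mem_Icc.1 hj
        apply Finset.mem_biUnion.2
        refine ⟨i + j, Finset.mem_Icc.2 ⟨by omega, by omega⟩, ?_⟩
        have h1 := hf i hi
        have h2 := hg j hj
        rw [abs_le] at h1 h2
        simp only [hF, Prod.mk_add_mk, Finset.mem_product, Finset.mem_singleton,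
          Finset.mem_Icc]
        have key : a * ((i : ℝ) + j) = a * i + a * j := by ring
        refine ⟨trivial, ?_, ?_⟩
        · rw [Int.ceil_le]
          push_cast
          nlinarith [h1.1, h2.1]
        · rw [Int.le_floor]
          push_cast
          nlinarith [h1.2, h2.2]
      have hfib : ∀ s ∈ Finset.Icc (iA + jA) (iB + jB), ((F s).card : ℝ) ≤ 8 * Δ + 1 := by
        intro s _
        have : (F s).card = (⌊a * s + b + c + 4 * Δ⌋ + 1 - ⌈a * s + b + c - 4 * Δ⌉).toNat := by
          simp [hF, Int.card_Icc]
        rw [this]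
        set z : ℤ := ⌊a * s + b + c + 4 * Δ⌋ + 1 - ⌈a * s + b + c - 4 * Δ⌉ with hz
        have hfl : (⌊a * s + b + c + 4 * Δ⌋ : ℝ) ≤ a * s + b + c + 4 * Δ := Int.floor_le _
        have hcl : a * s + b + c - 4 * Δ ≤ (⌈a * s + b + c - 4 * Δ⌉ : ℝ) := Int.le_ceil _
        rcases le_or_gt z 0 with h | h
        · rw [Int.toNat_of_nonpos h]
          simp
          positivity
        · have hzz : ((z.toNat : ℕ) : ℝ) = ((z : ℤ) : ℝ) := by
            exact_mod_cast Int.toNat_of_nonneg h.le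
          rw [hzz, hz]
          push_cast at hfl hcl ⊢
          linarith
      have hcard : (Finset.Icc (iA + jA) (iB + jB)).card =
          (Finset.Icc iA iB).card + (Finset.Icc jA jB).card - 1 := by
        rw [Int.card_Icc, Int.card_Icc, Int.card_Icc]
        omega
      calc ((((Finset.Icc iA iB).image fun i => (i, f i)) +
            ((Finset.Icc jA jB).image fun j => (j, g j))).card : ℝ)
          ≤ (((Finset.Icc (iA + jA) (iB + jB)).biUnion F).card : ℝ) := by
            exact_mod_cast Finset.card_le_card hsub
        _ ≤ ∑ s ∈ Finset.Icc (iA + jA) (iB + jB), ((F s).card : ℝ) := by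
            exact_mod_cast Finset.card_biUnion_le
        _ ≤ ∑ s ∈ Finset.Icc (iA + jA) (iB + jB), (8 * Δ + 1) := Finset.sum_le_sum hfib
        _ = ((Finset.Icc (iA + jA) (iB + jB)).card : ℝ) * (8 * Δ + 1) := by
            rw [Finset.sum_const, nsmul_eq_mul]
        _ = (((Finset.Icc iA iB).card + (Finset.Icc jA jB).card - 1 : ℕ) : ℝ) * (8 * Δ + 1) := by
            rw [hcard]
    · have : Finset.Icc jA jB = ∅ := Finset.Icc_eq_empty (by omega)
      simp [this]
      positivity
  · have : Finset.Icc iA iB = ∅ := Finset.Icc_eq_empty (by omega)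
    simp [this]
    positivity
end

section
/- Let f̆ : {0,…,n} → ℝ and ğ : {0,…,m} → ℝ be convex. Then their min-plus convolution h̆ : {0,…,n+m} → ℝ, defined by h̆(k) = min{ f̆(i) + ğ(j) : 0 ≤ i ≤ n, 0 ≤ j ≤ m, i + j = k }, is convex. -/
lemma slope_mono {N : ℕ} {φ : ℕ → ℝ} (h : IsConvexSeq N φ) :
    ∀ b a, a + 1 ≤ b → b ≤ N → φ (a + 1) - φ a ≤ φ b - φ (b - 1) := by
  intro b
  induction b with
  | zero => intro a ha _; omega
  | succ b ih =>
    intro a ha hb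
    rcases Nat.lt_or_ge a b with hab | hab
    · have h1 := ih a (by omega) (by omega)
      have h2 := h b (by omega) hb
      simp only [Nat.add_sub_cancel]
      linarith
    · have : a = b := by omega
      subst this
      simp

/-- The min-plus convolution of two convex functions is convex. -/
theorem minPlusConv_convex (n m : ℕ) (fc gc hc : ℕ → ℝ)
    (hfcvx : IsConvexSeq n fc) (hgcvx : IsConvexSeq m gc)
    (hhc : ∀ k ≤ n + m,
      IsLeast {v : ℝ | ∃ i ≤ n, ∃ j ≤ m, i + j = k ∧ v = fc i + gc j} (hc k)) :
    IsConvexSeq (n + m) hc := by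
  intro k hk1 hk2
  obtain ⟨⟨i₁, hi₁, j₁, hj₁, hij₁, hv₁⟩, -⟩ := hhc (k - 1) (by omega)
  obtain ⟨⟨i₂, hi₂, j₂, hj₂, hij₂, hv₂⟩, -⟩ := hhc (k + 1) (by omega)
  obtain ⟨-, hlb⟩ := hhc k (by omega)
  rcases Nat.lt_or_ge i₁ i₂ with hlt | hge
  · have hA : hc k ≤ fc (i₁ + 1) + gc j₁ :=
      hlb ⟨i₁ + 1, by omega, j₁, hj₁, by omega, rfl⟩
    have hB : hc k ≤ fc (i₂ - 1) + gc j₂ :=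
      hlb ⟨i₂ - 1, by omega, j₂, hj₂, by omega, rfl⟩
    have hs := slope_mono hfcvx i₂ i₁ (by omega) hi₂
    linarith
  · have hjlt : j₁ < j₂ := by omega
    have hA : hc k ≤ fc i₁ + gc (j₁ + 1) :=
      hlb ⟨i₁, hi₁, j₁ + 1, by omega, by omega, rfl⟩
    have hB : hc k ≤ fc i₂ + gc (j₂ - 1) :=
      hlb ⟨i₂, hi₂, j₂ - 1, by omega, by omega, rfl⟩
    have hs := slope_mono hgcvx j₂ j₁ (by omega) hj₂
    linarith
end
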